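/- For every (α,β,γ) ∈ (K^*)^3, the formulas v_k·e1 = α^{-1} β^2 ((q^{4k}-1)/(1-q^4)) v_{k-1} for 1 ≤ k ≤ l-1 and v_0·e1 = 0, v_k·e3 = q^{2k} β v_k, v_k·z = γ v_k, v_k·w = α v_{k+1 (mod l)} (for 0 ≤ k ≤ l-1) define a right B-module structure on the K-vector space with basis v_0,…,v_{l-1}, and the resulting module V2(α,β,γ) is a simple B-module of K-dimension l. -/

import Mathlib

/-!
Each generator acts by a weighted permutation of the basis `v_k`: `e3` and `z` diagonally, `w` by
the cyclic shift `k ↦ k + 1` and `e1` by its inverse. Weighted permutations are closed under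
composition, so every defining relation of `B` becomes an identity between weights, which holds
because `(q^2)^l = 1` and `q^4 ≠ 1`; the wrap-around `v_0 · e1 = 0` is built in since the
coefficient of `e1` vanishes at `k = 0` and `k = l`.

For simplicity: `q^2` is a primitive `l`-th root of unity, so `e3` has the pairwise distinct
eigenvalues `q^{2k} β`, and a nonzero invariant subspace contains some `v_k`; since `w` permutes the
`v_k` cyclically, it then contains all of them.
-/

noncomputable section

open MulOpposite

/-- The defining relations of the "good" subalgebra `B` of `U_q^+(B_2)`, on the free algebra
on generators `e1 = ι 0`, `e3 = ι 1`, `z = ι 2`, `w = ι 3`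
(where `w = e2·e3 + z/(q^2-1)` inside `U_q^+(B_2)`). -/
inductive BqRel (K : Type*) [Field K] (q : K) :
    FreeAlgebra K (Fin 4) → FreeAlgebra K (Fin 4) → Prop
  | e1e3 : BqRel K q (FreeAlgebra.ι K 0 * FreeAlgebra.ι K 1)
      (q⁻¹ ^ 2 • (FreeAlgebra.ι K 1 * FreeAlgebra.ι K 0))
  | e1z : BqRel K q (FreeAlgebra.ι K 0 * FreeAlgebra.ι K 2)
      (FreeAlgebra.ι K 2 * FreeAlgebra.ι K 0)
  | e3z : BqRel K q (FreeAlgebra.ι K 1 * FreeAlgebra.ι K 2)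
      (FreeAlgebra.ι K 2 * FreeAlgebra.ι K 1)
  | wz : BqRel K q (FreeAlgebra.ι K 3 * FreeAlgebra.ι K 2)
      (FreeAlgebra.ι K 2 * FreeAlgebra.ι K 3)
  | we3 : BqRel K q (FreeAlgebra.ι K 3 * FreeAlgebra.ι K 1)
      (q ^ 2 • (FreeAlgebra.ι K 1 * FreeAlgebra.ι K 3))
  | we1 : BqRel K q (FreeAlgebra.ι K 3 * FreeAlgebra.ι K 0)
      (FreeAlgebra.ι K 0 * FreeAlgebra.ι K 3 - FreeAlgebra.ι K 1 ^ 2)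

/-- The algebra `B`, presented by generators `e1, e3, z, w` and the relations above. -/
abbrev Bq (K : Type*) [Field K] (q : K) : Type _ := RingQuot (BqRel K q)

variable (K : Type*) [Field K] (q : K)

/-- The generator `e1` of `B`. -/
def Be1 : Bq K q := RingQuot.mkAlgHom K (BqRel K q) (FreeAlgebra.ι K 0)
/-- The generator `e3` of `B`. -/
def Be3 : Bq K q := RingQuot.mkAlgHom K (BqRel K q) (FreeAlgebra.ι K 1)
/-- The generator `z` of `B`. -/
def Bz : Bq K q := RingQuot.mkAlgHom K (BqRel K q) (FreeAlgebra.ι K 2)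
/-- The generator `w` of `B`. -/
def Bw : Bq K q := RingQuot.mkAlgHom K (BqRel K q) (FreeAlgebra.ι K 3)

open Function

section WeightedComp

variable {R ι : Type*} [CommRing R]

def weightedComp (a : ι → R) (σ : Equiv.Perm ι) : Module.End R (ι → R) :=
  LinearMap.mulLeft R a ∘ₗ LinearMap.funLeft R R σ

variable (a b : ι → R) (σ τ : Equiv.Perm ι)

@[simp]
theorem weightedComp_apply (v : ι → R) : weightedComp a σ v = a * (v ∘ σ) := rfl

theorem weightedComp_mul :
    weightedComp a σ * weightedComp b τ = weightedComp (a * (b ∘ σ)) (τ * σ) :=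
  LinearMap.ext fun v => funext fun j => by simp [mul_assoc]

theorem smul_weightedComp (c : R) : c • weightedComp a σ = weightedComp (c • a) σ :=
  LinearMap.ext fun v => funext fun j => by simp [mul_assoc]

theorem weightedComp_sub : weightedComp a σ - weightedComp b σ = weightedComp (a - b) σ :=
  LinearMap.ext fun v => funext fun j => by simp [sub_mul]

theorem weightedComp_single [DecidableEq ι] (i : ι) :
    weightedComp a σ (Pi.single (σ i) 1) = a i • Pi.single i 1 :=
  funext fun j => by rcases eq_or_ne j i with rfl | h <;> simp [*]

end WeightedComp

section Simplicity

variable {F ι : Type*} [Field F] [Fintype ι] [DecidableEq ι] {W : Submodule F (ι → F)}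

theorem Submodule.exists_single_mem_of_mul_mem {d : ι → F} (hd : Injective d)
    (hW : ∀ v ∈ W, d * v ∈ W) (hW0 : W ≠ ⊥) : ∃ i, Pi.single i (1 : F) ∈ W := by
  obtain ⟨v, ⟨hvW, hv0⟩, hmin⟩ := (measure fun v : ι → F => (support v).ncard).wf.has_min
    {v | v ∈ W ∧ v ≠ 0} ((Submodule.ne_bot_iff W).mp hW0)
  obtain ⟨i, hi⟩ : ∃ i, v i ≠ 0 := Function.ne_iff.mp hv0
  -- `d * v - d i • v` lies in `W` and has smaller support than `v`, so it vanishes.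
  have hker : d * v - d i • v = 0 := by
    by_contra hne
    refine hmin _ ⟨W.sub_mem (hW v hvW) (W.smul_mem _ hvW), hne⟩
      (Set.ncard_lt_ncard ?_ (Set.toFinite _))
    refine Set.ssubset_iff_of_subset (fun j hj => ?_) |>.mpr ⟨i, hi, by simp⟩
    exact Function.mem_support.mpr fun hvj => by simp [hvj] at hj
  have hsupp : ∀ j ≠ i, v j = 0 := fun j hj => by
    simpa [sub_eq_zero.not.mpr (hd.ne hj), ← sub_mul] using congrFun hker j
  refine ⟨i, ?_⟩
  convert W.smul_mem (v i)⁻¹ hvW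
  ext j
  rcases eq_or_ne j i with rfl | hj
  · simp [hi]
  · simp [hj, hsupp j hj]

theorem Submodule.eq_top_of_single_mem_of_isCycle {σ : Equiv.Perm ι} (hσ : σ.IsCycle)
    (hsupp : σ.support = Finset.univ)
    (hW : ∀ i, Pi.single i (1 : F) ∈ W → Pi.single (σ i) 1 ∈ W) {i₀ : ι}
    (h₀ : Pi.single i₀ (1 : F) ∈ W) : W = ⊤ := by
  have hpow : ∀ n : ℕ, Pi.single ((σ ^ n) i₀) (1 : F) ∈ W := by
    intro n
    induction n with
    | zero => simpa using h₀
    | succ n ih => simpa [pow_succ'] using hW _ ih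
  rw [eq_top_iff, ← (Pi.basisFun F ι).span_eq, Submodule.span_le]
  rintro _ ⟨i, rfl⟩
  obtain ⟨n, hn⟩ := hσ.exists_pow_eq (x := i₀) (y := i)
    (Equiv.Perm.mem_support.mp (hsupp ▸ Finset.mem_univ _))
    (Equiv.Perm.mem_support.mp (hsupp ▸ Finset.mem_univ _))
  simpa [hn] using hpow n

end Simplicity

namespace Bq

variable {K} {V : Type*} [AddCommGroup V] [Module K V]

/-- Operators acting on the right, `v · (x y) = (v · x) · y`, so a product `x y` in `B` becomes
the composite `Y * X`. -/
structure IsRightAction (E1 E3 Z W : Module.End K V) : Prop where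
  e1e3 : E3 * E1 = q⁻¹ ^ 2 • (E1 * E3)
  e1z : Z * E1 = E1 * Z
  e3z : Z * E3 = E3 * Z
  wz : Z * W = W * Z
  we3 : E3 * W = q ^ 2 • (W * E3)
  we1 : E1 * W = W * E1 - E3 ^ 2

variable {q} {E1 E3 Z W : Module.End K V} (h : IsRightAction q E1 E3 Z W)

def IsRightAction.lift : Bq K q →ₐ[K] (Module.End K V)ᵐᵒᵖ :=
  RingQuot.liftAlgHom K ⟨FreeAlgebra.lift K ![op E1, op E3, op Z, op W], fun _ _ r => by
    cases r <;> simp [← op_mul, ← op_smul, ← op_pow, ← op_sub, h.e1e3, h.e1z, h.e3z, h.wz, h.we3,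
      h.we1]⟩

@[simp] theorem IsRightAction.lift_e1 : h.lift (Be1 K q) = op E1 := by simp [lift, Be1]
@[simp] theorem IsRightAction.lift_e3 : h.lift (Be3 K q) = op E3 := by simp [lift, Be3]
@[simp] theorem IsRightAction.lift_z : h.lift (Bz K q) = op Z := by simp [lift, Bz]
@[simp] theorem IsRightAction.lift_w : h.lift (Bw K q) = op W := by simp [lift, Bw]

end Bq

theorem pow_val_finRotate {M : Type*} [Monoid M] {x : M} {l : ℕ} (hx : x ^ l = 1) (j : Fin l) :
    x ^ (finRotate l j : ℕ) = x * x ^ (j : ℕ) := by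
  obtain ⟨n, rfl⟩ : ∃ n, l = n + 1 := Nat.exists_eq_succ_of_ne_zero j.pos.ne'
  rw [coe_finRotate]
  split_ifs with h
  · rw [h, Fin.val_last, ← pow_succ', hx, pow_zero]
  · rw [pow_succ']

theorem IsPrimitiveRoot.sq {M : Type*} [CommMonoid M] {ζ : M} {m : ℕ} (h : IsPrimitiveRoot ζ m) :
    IsPrimitiveRoot (ζ ^ 2) (if Odd m then m else m / 2) := by
  split_ifs with hm
  · exact h.pow_of_coprime 2 (Nat.coprime_two_left.mpr hm)
  · exact h.pow_of_dvd two_ne_zero (even_iff_two_dvd.mp (Nat.not_odd_iff_even.mp hm))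

-- The module `V2(α,β,γ)` on `Fin l → K`, with `v_k = Pi.single k 1`.
namespace V2

variable {K} (α β γ : K) (l : ℕ)

def e1Coeff (k : ℕ) : K := α⁻¹ * β ^ 2 * ((q ^ (4 * k) - 1) / (1 - q ^ 4))

def e1 : Module.End K (Fin l → K) :=
  weightedComp (fun j => e1Coeff q α β (finRotate l j)) (finRotate l)

def e3 : Module.End K (Fin l → K) := weightedComp (fun j => q ^ (2 * (j : ℕ)) * β) 1

def z : Module.End K (Fin l → K) := algebraMap K _ γ

def w : Module.End K (Fin l → K) := weightedComp (fun _ => α) (finRotate l)⁻¹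

theorem isRightAction [NeZero l] (hα : α ≠ 0) (hq : (q ^ 2) ^ l = 1) (hq4 : q ^ 4 ≠ 1) :
    Bq.IsRightAction q (e1 q α β l) (e3 q β l) (z γ l) (w α l) := by
  have hq0 : q ≠ 0 := by rintro rfl; simp [NeZero.ne l] at hq
  have h2 (j : Fin l) : q ^ (2 * (finRotate l j : ℕ)) = q ^ 2 * q ^ (2 * (j : ℕ)) := by
    simpa only [← pow_mul] using pow_val_finRotate hq j
  have h4 (j : Fin l) : q ^ (4 * (finRotate l j : ℕ)) = q ^ 4 * q ^ (4 * (j : ℕ)) := by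
    have hq' : (q ^ 4) ^ l = 1 := by
      rw [show q ^ 4 = (q ^ 2) ^ 2 by ring, pow_right_comm, hq, one_pow]
    simpa only [← pow_mul] using pow_val_finRotate hq' j
  refine ⟨?_, Algebra.commutes γ _, Algebra.commutes γ _, Algebra.commutes γ _, ?_, ?_⟩
  · rw [e1, e3, weightedComp_mul, weightedComp_mul, smul_weightedComp, mul_one, one_mul]
    congr 1
    funext j
    simp only [Pi.mul_apply, Pi.smul_apply, Function.comp_apply, Equiv.Perm.coe_one, id_eq,
      smul_eq_mul, h2]
    field_simp
  · rw [e3, w, weightedComp_mul, weightedComp_mul, smul_weightedComp, mul_one, one_mul]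
    congr 1
    funext j
    simp only [Pi.mul_apply, Pi.smul_apply, Function.comp_apply, Equiv.Perm.coe_inv,
      smul_eq_mul]
    rw [← Equiv.apply_symm_apply (finRotate l) j, h2, Equiv.apply_symm_apply]
    ring
  · rw [e1, e3, w, sq, weightedComp_mul, weightedComp_mul, weightedComp_mul, inv_mul_cancel,
      mul_inv_cancel, mul_one, weightedComp_sub]
    congr 1
    funext j
    simp only [Pi.mul_apply, Pi.sub_apply, Function.comp_apply, Equiv.Perm.coe_one, id_eq,
      Equiv.Perm.coe_inv, Equiv.apply_symm_apply]
    simp only [e1Coeff, h4]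
    field_simp [sub_ne_zero.mpr hq4.symm]
    ring

theorem e1_single_finRotate (i : Fin l) :
    e1 q α β l (Pi.single (finRotate l i) 1) = e1Coeff q α β (finRotate l i) • Pi.single i 1 :=
  weightedComp_single _ _ i

theorem e1_single_of_pos (k : Fin l) (hk : 0 < (k : ℕ)) :
    e1 q α β l (Pi.single k 1) = e1Coeff q α β k • Pi.single (⟨k - 1, by omega⟩ : Fin l) 1 := by
  obtain ⟨n, rfl⟩ : ∃ n, l = n + 1 := Nat.exists_eq_succ_of_ne_zero k.pos.ne'
  have hne : (⟨k - 1, by omega⟩ : Fin (n + 1)) ≠ Fin.last n := Fin.ne_of_val_ne (by simp; omega)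
  have hk' : finRotate (n + 1) ⟨k - 1, by omega⟩ = k := by
    ext
    rw [coe_finRotate_of_ne_last hne]
    simp only
    omega
  simpa only [hk'] using e1_single_finRotate q α β (n + 1) ⟨k - 1, by omega⟩

theorem e1_single_of_eq_zero (k : Fin l) (hk : (k : ℕ) = 0) : e1 q α β l (Pi.single k 1) = 0 := by
  obtain ⟨n, rfl⟩ : ∃ n, l = n + 1 := Nat.exists_eq_succ_of_ne_zero k.pos.ne'
  obtain rfl : k = finRotate (n + 1) (Fin.last n) := by ext; simp [hk]
  rw [e1_single_finRotate]
  simp [e1Coeff]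

theorem e3_single (k : Fin l) :
    e3 q β l (Pi.single k 1) = (q ^ (2 * (k : ℕ)) * β) • Pi.single k 1 :=
  weightedComp_single _ 1 k

theorem z_apply (v : Fin l → K) : z γ l v = γ • v := Module.algebraMap_end_apply K K _ γ v

theorem w_single (k : Fin l) : w α l (Pi.single k 1) = α • Pi.single (finRotate l k) 1 := by
  have := weightedComp_single (fun _ => α) (finRotate l)⁻¹ (finRotate l k)
  rwa [Equiv.Perm.coe_inv, Equiv.symm_apply_apply] at this

theorem eq_bot_or_eq_top (hα : α ≠ 0) (hβ : β ≠ 0) (hq : IsPrimitiveRoot (q ^ 2) l) (hl : 2 ≤ l)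
    {W : Submodule K (Fin l → K)} (h3 : ∀ v ∈ W, e3 q β l v ∈ W) (hw : ∀ v ∈ W, w α l v ∈ W) :
    W = ⊥ ∨ W = ⊤ := by
  refine or_iff_not_imp_left.mpr fun hW0 => ?_
  have hinj : Injective fun j : Fin l => q ^ (2 * (j : ℕ)) * β := fun i j hij =>
    Fin.ext <| hq.pow_inj i.2 j.2 <| by simpa only [← pow_mul] using mul_right_cancel₀ hβ hij
  obtain ⟨i₀, h₀⟩ := Submodule.exists_single_mem_of_mul_mem hinj (fun v hv => by
    simpa [e3] using h3 v hv) hW0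
  refine Submodule.eq_top_of_single_mem_of_isCycle (isCycle_finRotate_of_le hl)
    (support_finRotate_of_le hl) (fun i hi => ?_) h₀
  simpa [w_single, smul_smul, hα] using W.smul_mem α⁻¹ (hw _ hi)

end V2

theorem stmt10 (m : ℕ) (hm : 5 ≤ m) (hq : IsPrimitiveRoot q m)
    (l : ℕ) (hl : l = if Odd m then m else m / 2)
    (α β γ : K) (hα : α ≠ 0) (hβ : β ≠ 0) :
    ∃ ρ : Bq K q →ₐ[K] (Module.End K (Fin l → K))ᵐᵒᵖ,
      (∀ k : Fin l, ∀ hk : 0 < (k : ℕ), (ρ (Be1 K q)).unop (Pi.single k 1) =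
        (α⁻¹ * β ^ 2 * ((q ^ (4 * (k : ℕ)) - 1) / (1 - q ^ 4))) •
          (Pi.single (⟨(k : ℕ) - 1, Nat.lt_of_le_of_lt (Nat.sub_le _ _) k.isLt⟩ : Fin l) 1 :
            Fin l → K)) ∧
      (∀ k : Fin l, (k : ℕ) = 0 → (ρ (Be1 K q)).unop (Pi.single k 1) = 0) ∧
      (∀ k : Fin l, (ρ (Be3 K q)).unop (Pi.single k 1) =
        (q ^ (2 * (k : ℕ)) * β) • (Pi.single k 1 : Fin l → K)) ∧
      (∀ k : Fin l, (ρ (Bz K q)).unop (Pi.single k 1) =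
        γ • (Pi.single k 1 : Fin l → K)) ∧
      (∀ k : Fin l, (ρ (Bw K q)).unop (Pi.single k 1) =
        α • (Pi.single (finRotate l k) 1 : Fin l → K)) ∧
      Nontrivial (Fin l → K) ∧
      (∀ W : Submodule K (Fin l → K),
        (∀ b : Bq K q, ∀ v ∈ W, (ρ b).unop v ∈ W) → W = ⊥ ∨ W = ⊤) ∧
      Module.finrank K (Fin l → K) = l := by
  have hq2 : IsPrimitiveRoot (q ^ 2) l := hl ▸ hq.sq
  have hl3 : 3 ≤ l := by
    rcases Nat.even_or_odd m with ⟨t, rfl⟩ | hodd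
    · rw [if_neg (Nat.not_odd_iff_even.mpr ⟨t, rfl⟩)] at hl
      omega
    · rw [if_pos hodd] at hl
      omega
  have : NeZero l := ⟨by omega⟩
  have hq4 : q ^ 4 ≠ 1 := by
    simpa [← pow_mul] using hq2.pow_ne_one_of_pos_of_lt two_ne_zero (by omega)
  have hB := V2.isRightAction q α β γ l hα hq2.pow_eq_one hq4
  refine ⟨hB.lift, ?_, ?_, ?_, ?_, ?_, inferInstance, fun W hW => ?_, Module.finrank_fin_fun K⟩
  · simp only [hB.lift_e1, unop_op]
    exact V2.e1_single_of_pos q α β l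
  · simp only [hB.lift_e1, unop_op]
    exact V2.e1_single_of_eq_zero q α β l
  · simp only [hB.lift_e3, unop_op]
    exact V2.e3_single q β l
  · simp only [hB.lift_z, unop_op]
    exact fun k => V2.z_apply γ l _
  · simp only [hB.lift_w, unop_op]
    exact V2.w_single α l
  · exact V2.eq_bot_or_eq_top q α β l hα hβ hq2 (by omega) (by simpa using hW (Be3 K q))
      (by simpa using hW (Bw K q))
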